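/- Let X = [0,1]^d and K : X → P(X) a Markov kernel satisfying Assumptions A1 and A2, and set K̄ = max_{i∈1:d} sup_{(x,y)∈X²} K_i(y_i | y_{1:i−1}, x). Then there exist δ̄ ∈ (0, 1/2] and a continuous strictly increasing function v : (0, δ̄] → (0,∞) with v(δ) ≤ δ and v(δ) → 0 as δ → 0, independent of (x̃, x') ∈ X², such that for every δ ∈ (0, δ̄] and every (x̃, x') ∈ X² there is a closed axis-aligned hypercube W̄ ⊆ [0,1]^d of side length 2.5 K̄ δ with F_K(x, B_{v(δ)}(x')) ⊆ W̄ for all x ∈ B_{v(δ)}(x̃). -/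

import Mathlib

open MeasureTheory ProbabilityTheory Set Filter
open scoped Classical

/-- The closed unit cube `[0,1]^d` in `ℝ^d` (modeled as `Fin d → ℝ` with the sup norm). -/
def cube (d : ℕ) : Set (Fin d → ℝ) := {x | ∀ i, x i ∈ Set.Icc (0:ℝ) 1}

/-- Membership in the `b`-ary box `∏_j [c_j b^{-e_j}, (c_j+1) b^{-e_j})`. -/
def inBaryBox {d : ℕ} (b : ℕ) (e c : Fin d → ℕ) (x : Fin d → ℝ) : Prop :=
  ∀ j, (c j : ℝ) / (b : ℝ) ^ (e j) ≤ x j ∧ x j < ((c j : ℝ) + 1) / (b : ℝ) ^ (e j)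

/-- The block `{u^n : A ≤ n < A + b^m}` is a `(t,m,d)`-net in base `b`: every `b`-ary box of
volume `b^{t-m}` contains exactly `b^t` points of the block. -/
def IsNetBlock {d : ℕ} (b t m : ℕ) (u : ℕ → Fin d → ℝ) (A : ℕ) : Prop :=
  ∀ e c : Fin d → ℕ, (∀ j, c j < b ^ (e j)) → (∑ j, e j) = m - t →
    ((Finset.Ico A (A + b ^ m)).filter (fun n => inBaryBox b e c (u n))).card = b ^ t

/-- `(u^n)_{n≥0}` is a `(t,d)`-sequence in base `b`. -/
def IsTSeq {d : ℕ} (b t : ℕ) (u : ℕ → Fin d → ℝ) : Prop :=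
  (∀ n i, u n i ∈ Set.Ico (0:ℝ) 1) ∧
  ∀ a m : ℕ, t ≤ m → IsNetBlock b t m u (a * b ^ m)

/-- `(v^n)_{n≥0}` is a scalar `(t,1)`-sequence in base `b`. -/
def IsTSeq1 (b t : ℕ) (v : ℕ → ℝ) : Prop :=
  (∀ n, v n ∈ Set.Ico (0:ℝ) 1) ∧
  ∀ a m : ℕ, t ≤ m → ∀ c : ℕ, c < b ^ (m - t) →
    ((Finset.Ico (a * b ^ m) (a * b ^ m + b ^ m)).filter
      (fun n => (c : ℝ) / (b:ℝ) ^ (m - t) ≤ v n ∧ v n < ((c : ℝ) + 1) / (b:ℝ) ^ (m - t))).card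
      = b ^ t

/-- `k_n`: the smallest integer `k` such that `n < b^k`. -/
noncomputable def kOf (b n : ℕ) : ℕ := sInf {k | n < b ^ k}

section Rosenblatt

variable {d : ℕ}

/-- Marginal of the density `κ(·|x)` over the first `i` coordinates: the first `i` coordinates
are fixed to those of `y`, the remaining ones are integrated out over the unit cube. -/
noncomputable def marg (κ : (Fin d → ℝ) → (Fin d → ℝ) → ℝ) (i : ℕ) (x y : Fin d → ℝ) : ℝ :=
  ∫ z in cube d, κ x (fun j => if (j : ℕ) < i then y j else z j)

/-- `K_i(y_i | y_{1:i-1}, x)`: the `i`-th conditional density of the kernel density `κ`. -/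
noncomputable def condDensity (κ : (Fin d → ℝ) → (Fin d → ℝ) → ℝ) (i : Fin d)
    (x y : Fin d → ℝ) : ℝ :=
  marg κ ((i : ℕ) + 1) x y / marg κ (i : ℕ) x y

/-- `F_{K_i}(s | x, y_{1:i-1})`: the `i`-th conditional CDF of the kernel density `κ`. -/
noncomputable def condCDF' (κ : (Fin d → ℝ) → (Fin d → ℝ) → ℝ) (i : Fin d)
    (x y : Fin d → ℝ) (s : ℝ) : ℝ :=
  ∫ r in (0:ℝ)..s, condDensity κ i x (Function.update y i r)

/-- The Rosenblatt transform `F_K(x,·)` of the kernel with density `κ`. -/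
noncomputable def Ros (κ : (Fin d → ℝ) → (Fin d → ℝ) → ℝ) (x y : Fin d → ℝ) : Fin d → ℝ :=
  fun i => condCDF' κ i x y (y i)

/-- Assumption (A1): each conditional CDF is strictly increasing in its main argument. -/
def A1 (κ : (Fin d → ℝ) → (Fin d → ℝ) → ℝ) : Prop :=
  ∀ x ∈ cube d, ∀ y ∈ cube d, ∀ i : Fin d,
    StrictMonoOn (fun s => condCDF' κ i x y s) (Set.Icc (0:ℝ) 1)

/-- Assumption (A2): the density `κ` is continuous on `X²` and bounded below by `Klow > 0`. -/
def A2 (κ : (Fin d → ℝ) → (Fin d → ℝ) → ℝ) (Klow : ℝ) : Prop :=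
  ContinuousOn (fun p : (Fin d → ℝ) × (Fin d → ℝ) => κ p.1 p.2) ((cube d) ×ˢ (cube d)) ∧
  0 < Klow ∧ ∀ x ∈ cube d, ∀ y ∈ cube d, Klow ≤ κ x y

/-- `κ` is a probability density in its second argument, w.r.t. Lebesgue measure on the cube. -/
def IsMarkovDensity (κ : (Fin d → ℝ) → (Fin d → ℝ) → ℝ) : Prop :=
  ∀ x ∈ cube d, (∀ y ∈ cube d, 0 ≤ κ x y) ∧ ∫ y in cube d, κ x y = 1

/-- `G` is the inverse Rosenblatt transform associated with `κ`. -/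
def IsInvRos (κ : (Fin d → ℝ) → (Fin d → ℝ) → ℝ)
    (G : (Fin d → ℝ) → (Fin d → ℝ) → (Fin d → ℝ)) : Prop :=
  ∀ x ∈ cube d, ∀ u : Fin d → ℝ, (∀ i, u i ∈ Set.Icc (0:ℝ) 1) →
    G x u ∈ cube d ∧ Ros κ x (G x u) = u

/-- The sup-norm ball `B_δ(x)` of radius `δ` around `x`, intersected with the cube. -/
def ball' {d : ℕ} (δ : ℝ) (x : Fin d → ℝ) : Set (Fin d → ℝ) :=
  {y ∈ cube d | ‖y - x‖ ≤ δ}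

end Rosenblatt

/-- `K̄ = max_{i} sup_{(x,y) ∈ X²} K_i(y_i | y_{1:i-1}, x)`. -/
noncomputable def Kbar {d : ℕ} (κ : (Fin d → ℝ) → (Fin d → ℝ) → ℝ) : ℝ :=
  sSup {r | ∃ (i : Fin d) (x y : Fin d → ℝ),
    x ∈ cube d ∧ y ∈ cube d ∧ condDensity κ i x y = r}

/-! The density extends (Tietze) to a continuous function, positive on `X²`, so the marginals are
continuous and positive on `X²` and each conditional density `K_i` is uniformly continuous on the
compact set `X²` and bounded by `K̄`. Splitting `F_{K_i}(y_i | x, y) - F_{K_i}(y'_i | x', y')` into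
the integral of `K_i(·|x,y) - K_i(·|x',y')` over `[0, y_i]` and the integral of `K_i(·|x',y')`
over `[y'_i, y_i]` bounds it by `ε + K̄ |y_i - y'_i|` once `(x, y)` is close to `(x', y')`.
With `ε = K̄δ/4` and `v(δ) ≤ δ` a continuous strictly increasing minorant of the corresponding
radius (the primitive of a monotone selection of radii), `F_K(x, y)` stays within `1.25 K̄δ` of
`F_K(x̃, x')`; a box of side `2.5 K̄δ` around that point, pushed back into the cube, contains
them all. -/

open Function (update)

section Modulus

variable {P : ℝ → ℝ → Prop}

lemma exists_monotone_forall_of_forall_exists (hex : ∀ t > 0, ∃ r > 0, P t r)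
    (hanti : ∀ t r r', 0 < r' → r' ≤ r → P t r → P t r')
    (hmono : ∀ t t' r, t ≤ t' → P t r → P t' r) :
    ∃ η : ℝ → ℝ, Monotone η ∧ (∀ t, η t ≤ 1) ∧ ∀ t > 0, 0 < η t ∧ P t (η t) := by
  set S : ℝ → Set ℝ := fun t => {r | r ∈ Ioc 0 1 ∧ P t r}
  have hbdd : ∀ t, BddAbove (S t) := fun t => ⟨1, fun r hr => hr.1.2⟩
  have hne : ∀ t > 0, (S t).Nonempty := fun t ht => by
    obtain ⟨r, hr, hP⟩ := hex t ht
    exact ⟨min r 1, ⟨lt_min hr one_pos, min_le_right _ _⟩,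
      hanti t r _ (lt_min hr one_pos) (min_le_left _ _) hP⟩
  -- Halving keeps `η t` strictly below the supremum, hence below some admissible radius.
  refine ⟨fun t => sSup (S t) / 2, fun t t' htt' => ?_, fun t => ?_, fun t ht => ?_⟩
  · have hsub : S t ⊆ S t' := fun r hr => ⟨hr.1, hmono t t' r htt' hr.2⟩
    rcases (S t).eq_empty_or_nonempty with h | h
    · have := Real.sSup_nonneg fun r (hr : r ∈ S t') => hr.1.1.le
      simp only [h, Real.sSup_empty]
      linarith
    · have := csSup_le_csSup (hbdd t') h hsub
      dsimp only
      linarith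
  · have := Real.sSup_le (fun r (hr : r ∈ S t) => hr.1.2) zero_le_one
    dsimp only
    linarith
  · have hsup : 0 < sSup (S t) :=
      (hne t ht).elim fun r hr => hr.1.1.trans_le (le_csSup (hbdd t) hr)
    obtain ⟨r, hr, hlt⟩ := exists_lt_of_lt_csSup (hne t ht) (half_lt_self hsup)
    exact ⟨half_pos hsup, hanti t r _ (half_pos hsup) hlt.le hr.2⟩

lemma exists_continuous_strictMonoOn_of_forall_exists (hex : ∀ t > 0, ∃ r > 0, P t r)
    (hanti : ∀ t r r', 0 < r' → r' ≤ r → P t r → P t r')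
    (hmono : ∀ t t' r, t ≤ t' → P t r → P t' r) :
    ∃ v : ℝ → ℝ, Continuous v ∧ v 0 = 0 ∧ StrictMonoOn v (Ioi 0) ∧
      ∀ δ ∈ Ioc 0 1, 0 < v δ ∧ v δ ≤ δ ∧ P δ (v δ) := by
  obtain ⟨η, hη_mono, hη_le, hη⟩ := exists_monotone_forall_of_forall_exists hex hanti hmono
  have hint : ∀ a b, IntervalIntegrable η volume a b := fun _ _ => hη_mono.intervalIntegrable
  have hpos : ∀ δ > 0, 0 < ∫ t in 0..δ, η t := fun δ hδ =>
    intervalIntegral.intervalIntegral_pos_of_pos_on (hint 0 δ) (fun t ht => (hη t ht.1).1) hδ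
  have hle : ∀ δ, 0 ≤ δ → ∫ t in 0..δ, η t ≤ δ * η δ := fun δ hδ => by
    simpa using intervalIntegral.integral_mono_on hδ (hint 0 δ) intervalIntegrable_const
      fun t ht => hη_mono ht.2
  refine ⟨fun δ => ∫ t in 0..δ, η t, intervalIntegral.continuous_primitive hint 0,
    intervalIntegral.integral_same, fun a ha b _ hab => ?_,
    fun δ hδ => ⟨hpos δ hδ.1, ?_, ?_⟩⟩
  · have hηa := (hη a ha).1
    have := intervalIntegral.integral_mono_on hab.le intervalIntegrable_const (hint a b)
      fun t ht => hη_mono ht.1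
    rw [intervalIntegral.integral_const, smul_eq_mul] at this
    dsimp only
    rw [← intervalIntegral.integral_add_adjacent_intervals (hint 0 a) (hint a b)]
    nlinarith
  · exact (hle δ hδ.1.le).trans (mul_le_of_le_one_right hδ.1.le (hη_le δ))
  · have hηδ := hη δ hδ.1
    exact hanti δ (η δ) _ (hpos δ hδ.1) (by nlinarith [hle δ hδ.1.le, hδ.2]) hηδ.2

end Modulus

lemma abs_integral_sub_integral_le {g g' : ℝ → ℝ} {a b ε C : ℝ} (ha : a ∈ Icc (0:ℝ) 1)
    (hb : b ∈ Icc (0:ℝ) 1) (hg : ContinuousOn g (Icc 0 1)) (hg' : ContinuousOn g' (Icc 0 1))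
    (hclose : ∀ r ∈ Icc (0:ℝ) 1, |g r - g' r| ≤ ε)
    (hbound : ∀ r ∈ Icc (0:ℝ) 1, |g' r| ≤ C) :
    |(∫ r in 0..a, g r) - ∫ r in 0..b, g' r| ≤ ε + C * |a - b| := by
  have h0 : (0:ℝ) ∈ Icc (0:ℝ) 1 := ⟨le_rfl, zero_le_one⟩
  have hint : ∀ {f : ℝ → ℝ}, ContinuousOn f (Icc 0 1) →
      ∀ {s t}, s ∈ Icc (0:ℝ) 1 → t ∈ Icc (0:ℝ) 1 → IntervalIntegrable f volume s t :=
    fun hf _ _ hs ht => (hf.mono (uIcc_subset_Icc hs ht)).intervalIntegrable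
  have hsplit : (∫ r in 0..a, g r) - ∫ r in 0..b, g' r
      = (∫ r in 0..a, (g r - g' r)) + ∫ r in b..a, g' r := by
    rw [intervalIntegral.integral_sub (hint hg h0 ha) (hint hg' h0 ha),
      ← intervalIntegral.integral_interval_sub_left (hint hg' h0 ha) (hint hg' h0 hb)]
    ring
  have hsub : ∀ {s t : ℝ}, s ∈ Icc (0:ℝ) 1 → t ∈ Icc (0:ℝ) 1 → uIoc s t ⊆ Icc 0 1 :=
    fun hs ht => uIoc_subset_uIcc.trans (uIcc_subset_Icc hs ht)
  have h1 : ‖∫ r in 0..a, (g r - g' r)‖ ≤ ε * |a - 0| :=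
    intervalIntegral.norm_integral_le_of_norm_le_const fun r hr => hclose r (hsub h0 ha hr)
  have h2 : ‖∫ r in b..a, g' r‖ ≤ C * |a - b| :=
    intervalIntegral.norm_integral_le_of_norm_le_const fun r hr => hbound r (hsub hb ha hr)
  have hε : 0 ≤ ε := (abs_nonneg _).trans (hclose 0 h0)
  have ha1 : |a - 0| ≤ 1 := by rw [sub_zero, abs_of_nonneg ha.1]; exact ha.2
  rw [hsplit]
  calc _ ≤ |∫ r in 0..a, (g r - g' r)| + |∫ r in b..a, g' r| := abs_add_le _ _
    _ ≤ ε * |a - 0| + C * |a - b| := add_le_add h1 h2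
    _ ≤ ε + C * |a - b| := by nlinarith

lemma measurePreserving_update_prod {ι : Type*} [Fintype ι] [DecidableEq ι] {X : ι → Type*}
    [∀ i, MeasurableSpace (X i)] (μ : ∀ i, Measure (X i)) [∀ i, IsProbabilityMeasure (μ i)]
    (i : ι) :
    MeasurePreserving (fun p : X i × (∀ j, X j) => update p.2 i p.1)
      ((μ i).prod (Measure.pi μ)) (Measure.pi μ) := by
  have hmeas : Measurable fun p : X i × (∀ j, X j) => update p.2 i p.1 :=
    measurable_update'.comp measurable_swap
  refine ⟨hmeas, (Measure.pi_eq fun s hs => ?_).symm⟩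
  have hpre : (fun p : X i × (∀ j, X j) => update p.2 i p.1) ⁻¹' pi univ s
      = s i ×ˢ pi univ (update s i univ) := by
    ext ⟨r, z⟩
    simp only [mem_preimage, Set.mem_pi, mem_univ, true_implies, Set.mem_prod]
    constructor
    · intro h
      refine ⟨by simpa using h i, fun j => ?_⟩
      by_cases hj : j = i
      · subst hj; simp
      · simpa [hj] using h j
    · rintro ⟨hr, hz⟩ j
      by_cases hj : j = i
      · subst hj; simpa using hr
      · simpa [hj] using hz j
  have hprod : ∏ j, μ j (update s i univ j) = ∏ j ∈ Finset.univ.erase i, μ j (s j) := by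
    rw [← Finset.mul_prod_erase _ _ (Finset.mem_univ i), Function.update_self, measure_univ,
      one_mul]
    exact Finset.prod_congr rfl fun j hj => by
      rw [Function.update_of_ne (Finset.ne_of_mem_erase hj)]
  rw [Measure.map_apply hmeas (MeasurableSet.univ_pi hs), hpre, Measure.prod_prod, Measure.pi_pi,
    hprod, Finset.mul_prod_erase _ (fun j => μ j (s j)) (Finset.mem_univ i)]

section Cube

variable {d : ℕ}

lemma cube_eq_pi (d : ℕ) : cube d = pi univ fun _ => Icc (0:ℝ) 1 := by
  ext; simp only [cube, Set.mem_pi, mem_univ, forall_true_left]; rfl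

lemma isCompact_cube : IsCompact (cube d) :=
  cube_eq_pi d ▸ isCompact_univ_pi fun _ => isCompact_Icc

lemma measurableSet_cube : MeasurableSet (cube d) :=
  isCompact_cube.isClosed.measurableSet

lemma volume_cube : volume (cube d) = 1 := by
  rw [cube_eq_pi, volume_pi_pi]; simp

lemma update_mem_cube {y : Fin d → ℝ} (hy : y ∈ cube d) (i : Fin d) {r : ℝ}
    (hr : r ∈ Icc (0:ℝ) 1) : update y i r ∈ cube d := by
  intro j
  by_cases h : j = i
  · subst h; simpa using hr
  · rw [Function.update_of_ne h]; exact hy j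

lemma volume_restrict_cube :
    volume.restrict (cube d) = Measure.pi fun _ => volume.restrict (Icc (0:ℝ) 1) := by
  refine (Measure.pi_eq fun s hs => ?_).symm
  rw [Measure.restrict_apply (MeasurableSet.univ_pi hs), cube_eq_pi, ← pi_inter_distrib,
    volume_pi_pi]
  exact Finset.prod_congr rfl fun i _ => (Measure.restrict_apply (hs i)).symm

lemma integral_integral_update_cube {f : (Fin d → ℝ) → ℝ} (hf : IntegrableOn f (cube d))
    (i : Fin d) :
    ∫ r in (0:ℝ)..1, ∫ z in cube d, f (update z i r) = ∫ z in cube d, f z := by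
  have : IsProbabilityMeasure (volume.restrict (Icc (0:ℝ) 1)) := ⟨by simp⟩
  have hφ := measurePreserving_update_prod (fun _ : Fin d => volume.restrict (Icc (0:ℝ) 1)) i
  rw [IntegrableOn, volume_restrict_cube] at hf
  have hfφ : Integrable (fun p : ℝ × (Fin d → ℝ) => f (update p.2 i p.1)) _ :=
    (hφ.integrable_comp hf.aestronglyMeasurable).2 hf
  rw [intervalIntegral.integral_of_le zero_le_one, ← integral_Icc_eq_integral_Ioc,
    volume_restrict_cube, ← integral_prod _ hfφ]
  conv_rhs => rw [← hφ.map_eq]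
  exact (integral_map hφ.measurable.aemeasurable
    (by rw [hφ.map_eq]; exact hf.aestronglyMeasurable)).symm

lemma setIntegral_cube_pos {f : (Fin d → ℝ) → ℝ} (hf : ContinuousOn f (cube d))
    (hpos : ∀ z ∈ cube d, 0 < f z) : 0 < ∫ z in cube d, f z := by
  rw [setIntegral_pos_iff_support_of_nonneg_ae
    (ae_restrict_of_forall_mem measurableSet_cube fun z hz => (hpos z hz).le)
    (hf.integrableOn_compact isCompact_cube),
    inter_eq_right.2 fun z hz => Function.mem_support.2 (hpos z hz).ne', volume_cube]
  exact one_pos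

end Cube

section Rosenblatt

variable {d : ℕ}

def glue (i : ℕ) (y z : Fin d → ℝ) : Fin d → ℝ :=
  fun j => if (j : ℕ) < i then y j else z j

lemma glue_mem_cube {i : ℕ} {y z : Fin d → ℝ} (hy : y ∈ cube d) (hz : z ∈ cube d) :
    glue i y z ∈ cube d := fun j => by
  unfold glue; split_ifs
  · exact hy j
  · exact hz j

lemma continuous_glue (i : ℕ) :
    Continuous fun p : (Fin d → ℝ) × (Fin d → ℝ) => glue i p.1 p.2 :=
  continuous_pi fun j => by
    by_cases h : (j : ℕ) < i <;> simp only [glue, h, if_true, if_false] <;> fun_prop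

lemma glue_update_left (i : Fin d) (y z : Fin d → ℝ) (r : ℝ) :
    glue i (update y i r) z = glue i y z := by
  ext j
  unfold glue
  split_ifs with h
  · exact Function.update_of_ne (Fin.ne_of_val_ne h.ne) _ _
  · rfl

lemma glue_update_right (i : Fin d) (y z : Fin d → ℝ) (r : ℝ) :
    glue i y (update z i r) = glue (i + 1) (update y i r) z := by
  ext j
  unfold glue
  rcases lt_trichotomy (j : ℕ) i with h | h | h
  · rw [if_pos h, if_pos (by omega), Function.update_of_ne (Fin.ne_of_val_ne h.ne)]
  · obtain rfl : j = i := Fin.ext h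
    simp
  · rw [if_neg (by omega), if_neg (by omega), Function.update_of_ne (Fin.ne_of_val_ne h.ne')]

lemma marg_eq_integral_glue (κ : (Fin d → ℝ) → (Fin d → ℝ) → ℝ) (i : ℕ)
    (x y : Fin d → ℝ) : marg κ i x y = ∫ z in cube d, κ x (glue i y z) := rfl

lemma condDensity_update (κ : (Fin d → ℝ) → (Fin d → ℝ) → ℝ) (i : Fin d)
    (x y : Fin d → ℝ) (r : ℝ) :
    condDensity κ i x (update y i r) = marg κ (i + 1) x (update y i r) / marg κ i x y := by
  simp only [condDensity, marg_eq_integral_glue, glue_update_left]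

section Congr

variable {κ k : (Fin d → ℝ) → (Fin d → ℝ) → ℝ}
  (hκk : ∀ x ∈ cube d, ∀ y ∈ cube d, κ x y = k x y)
include hκk

lemma condDensity_congr {x y : Fin d → ℝ} (hx : x ∈ cube d) (hy : y ∈ cube d) (i : Fin d) :
    condDensity κ i x y = condDensity k i x y := by
  have hmarg : ∀ n, marg κ n x y = marg k n x y := fun n =>
    setIntegral_congr_fun measurableSet_cube fun z hz => hκk x hx _ (glue_mem_cube hy hz)
  rw [condDensity, condDensity, hmarg, hmarg]

lemma Ros_congr {x y : Fin d → ℝ} (hx : x ∈ cube d) (hy : y ∈ cube d) :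
    Ros κ x y = Ros k x y := funext fun i =>
  intervalIntegral.integral_congr fun _ hr => condDensity_congr hκk hx
    (update_mem_cube hy i (uIcc_subset_Icc ⟨le_rfl, zero_le_one⟩ (hy i) hr)) i

lemma Kbar_congr : Kbar κ = Kbar k := by
  unfold Kbar
  congr 1
  ext r
  constructor <;> rintro ⟨i, x, y, hx, hy, rfl⟩
  · exact ⟨i, x, y, hx, hy, (condDensity_congr hκk hx hy i).symm⟩
  · exact ⟨i, x, y, hx, hy, condDensity_congr hκk hx hy i⟩

end Congr

lemma exists_continuous_eqOn_cube_prod {κ : (Fin d → ℝ) → (Fin d → ℝ) → ℝ}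
    (hκ : ContinuousOn (fun p : (Fin d → ℝ) × (Fin d → ℝ) => κ p.1 p.2)
      (cube d ×ˢ cube d)) :
    ∃ k : (Fin d → ℝ) → (Fin d → ℝ) → ℝ,
      Continuous (fun p : (Fin d → ℝ) × (Fin d → ℝ) => k p.1 p.2) ∧
      ∀ x ∈ cube d, ∀ y ∈ cube d, κ x y = k x y := by
  obtain ⟨g, hg⟩ := ContinuousMap.exists_restrict_eq (isCompact_cube.prod isCompact_cube).isClosed
    ⟨_, continuousOn_iff_continuous_domRestrict.1 hκ⟩
  refine ⟨fun x y => g (x, y), g.continuous, fun x hx y hy => ?_⟩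
  simpa [ContinuousMap.restrict] using (DFunLike.congr_fun hg ⟨(x, y), hx, hy⟩).symm

section Continuous

variable {k : (Fin d → ℝ) → (Fin d → ℝ) → ℝ}
  (hk : Continuous fun p : (Fin d → ℝ) × (Fin d → ℝ) => k p.1 p.2)
  (hpos : ∀ x ∈ cube d, ∀ y ∈ cube d, 0 < k x y)
include hk

lemma continuous_glue_integrand (i : ℕ) (x y : Fin d → ℝ) :
    Continuous fun z => k x (glue i y z) :=
  hk.comp (continuous_const.prodMk ((continuous_glue i).comp
    (continuous_const.prodMk continuous_id)))

lemma continuous_marg (i : ℕ) :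
    Continuous fun p : (Fin d → ℝ) × (Fin d → ℝ) => marg k i p.1 p.2 :=
  continuous_parametric_integral_of_continuous
    (f := fun (p : (Fin d → ℝ) × (Fin d → ℝ)) (z : Fin d → ℝ) => k p.1 (glue i p.2 z))
    (hk.comp (continuous_fst.fst.prodMk
      ((continuous_glue i).comp (continuous_fst.snd.prodMk continuous_snd)))) isCompact_cube

lemma integral_marg_update (i : Fin d) (x y : Fin d → ℝ) :
    ∫ r in (0:ℝ)..1, marg k (i + 1) x (update y i r) = marg k i x y := by
  simp only [marg_eq_integral_glue, ← glue_update_right]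
  exact integral_integral_update_cube
    ((continuous_glue_integrand hk i x y).continuousOn.integrableOn_compact isCompact_cube) i

include hpos

lemma marg_pos {x y : Fin d → ℝ} (hx : x ∈ cube d) (hy : y ∈ cube d) (i : ℕ) :
    0 < marg k i x y :=
  setIntegral_cube_pos (continuous_glue_integrand hk i x y).continuousOn
    fun _ hz => hpos x hx _ (glue_mem_cube hy hz)

lemma condDensity_pos {x y : Fin d → ℝ} (hx : x ∈ cube d) (hy : y ∈ cube d) (i : Fin d) :
    0 < condDensity k i x y :=
  div_pos (marg_pos hk hpos hx hy _) (marg_pos hk hpos hx hy _)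

lemma continuousOn_condDensity (i : Fin d) :
    ContinuousOn (fun p : (Fin d → ℝ) × (Fin d → ℝ) => condDensity k i p.1 p.2)
      (cube d ×ˢ cube d) :=
  (continuous_marg hk _).continuousOn.div (continuous_marg hk _).continuousOn
    fun _ hp => (marg_pos hk hpos hp.1 hp.2 _).ne'

lemma continuousOn_condDensity_update {x y : Fin d → ℝ} (hx : x ∈ cube d) (hy : y ∈ cube d)
    (i : Fin d) : ContinuousOn (fun r => condDensity k i x (update y i r)) (Icc 0 1) :=
  (continuousOn_condDensity hk hpos i).comp
    (continuous_const.prodMk (continuous_const.update i continuous_id)).continuousOn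
    fun _ hr => ⟨hx, update_mem_cube hy i hr⟩

lemma bddAbove_condDensity :
    BddAbove {r | ∃ (i : Fin d) (x y : Fin d → ℝ),
      x ∈ cube d ∧ y ∈ cube d ∧ condDensity k i x y = r} := by
  refine ((finite_univ.bddAbove_biUnion).2 fun i _ =>
    (isCompact_cube.prod isCompact_cube).bddAbove_image
      (continuousOn_condDensity hk hpos i)).mono ?_
  rintro _ ⟨i, x, y, hx, hy, rfl⟩
  exact mem_biUnion (mem_univ i) ⟨(x, y), ⟨hx, hy⟩, rfl⟩

lemma condDensity_le_Kbar {x y : Fin d → ℝ} (hx : x ∈ cube d) (hy : y ∈ cube d)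
    (i : Fin d) : condDensity k i x y ≤ Kbar k :=
  le_csSup (bddAbove_condDensity hk hpos) ⟨i, x, y, hx, hy, rfl⟩

lemma Kbar_pos (hd : 0 < d) : 0 < Kbar k := by
  have h0 : (fun _ => 0 : Fin d → ℝ) ∈ cube d := fun _ => ⟨le_rfl, zero_le_one⟩
  exact (condDensity_pos hk hpos h0 h0 ⟨0, hd⟩).trans_le (condDensity_le_Kbar hk hpos h0 h0 _)

lemma condCDF'_one {x y : Fin d → ℝ} (hx : x ∈ cube d) (hy : y ∈ cube d) (i : Fin d) :
    condCDF' k i x y 1 = 1 := by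
  simp only [condCDF', condDensity_update]
  rw [intervalIntegral.integral_div, integral_marg_update hk,
    div_self (marg_pos hk hpos hx hy _).ne']

lemma Ros_mem_cube {x y : Fin d → ℝ} (hx : x ∈ cube d) (hy : y ∈ cube d) :
    Ros k x y ∈ cube d := fun i => by
  have hnonneg : ∀ r ∈ Icc (0:ℝ) 1, 0 ≤ condDensity k i x (update y i r) :=
    fun r hr => (condDensity_pos hk hpos hx (update_mem_cube hy i hr) i).le
  refine ⟨intervalIntegral.integral_nonneg (hy i).1
    fun r hr => hnonneg r ⟨hr.1, hr.2.trans (hy i).2⟩, ?_⟩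
  calc Ros k x y i = condCDF' k i x y (y i) := rfl
    _ ≤ condCDF' k i x y 1 :=
      intervalIntegral.integral_mono_interval le_rfl (hy i).1 (hy i).2
        (ae_restrict_of_forall_mem measurableSet_Ioc
          fun r hr => hnonneg r (Ioc_subset_Icc_self hr))
        ((continuousOn_condDensity_update hk hpos hx hy i).intervalIntegrable_of_Icc
          zero_le_one)
    _ = 1 := condCDF'_one hk hpos hx hy i

lemma exists_abs_Ros_sub_le {ε : ℝ} (hε : 0 < ε) :
    ∃ ρ > 0, ∀ x ∈ cube d, ∀ x' ∈ cube d, ∀ y ∈ cube d, ∀ y' ∈ cube d,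
      dist x x' ≤ ρ → dist y y' ≤ ρ →
        ∀ i, |Ros k x y i - Ros k x' y' i| ≤ ε + Kbar k * dist y y' := by
  obtain ⟨ρ, hρ, hclose⟩ := Metric.uniformContinuousOn_iff_le.1
    ((isCompact_cube.prod isCompact_cube).uniformContinuousOn_of_continuous
      (continuousOn_pi.2 fun i => continuousOn_condDensity hk hpos i)) ε hε
  refine ⟨ρ, hρ, fun x hx x' hx' y hy y' hy' hdx hdy i => ?_⟩
  have hdist : ∀ r, dist (x, update y i r) (x', update y' i r) ≤ ρ := fun r =>
    max_le hdx ((dist_pi_le_iff hρ.le).2 fun j => by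
      by_cases hj : j = i
      · subst hj; simpa using hρ.le
      · simpa [hj] using (dist_le_pi_dist y y' j).trans hdy)
  refine (abs_integral_sub_integral_le (C := Kbar k) (hy i) (hy' i)
    (continuousOn_condDensity_update hk hpos hx hy i)
    (continuousOn_condDensity_update hk hpos hx' hy' i)
    (fun r hr => ((dist_le_pi_dist _ _ i).trans (hclose _ ⟨hx, update_mem_cube hy i hr⟩ _
      ⟨hx', update_mem_cube hy' i hr⟩ (hdist r))))
    (fun r hr => ?_)).trans ?_
  · rw [abs_of_pos (condDensity_pos hk hpos hx' (update_mem_cube hy' i hr) i)]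
    exact condDensity_le_Kbar hk hpos hx' (update_mem_cube hy' i hr) i
  · gcongr
    · exact (Kbar_pos hk hpos (Fin.pos i)).le
    · exact dist_le_pi_dist y y' i

lemma exists_continuous_strictMonoOn_abs_Ros_sub_le (hd : 0 < d) :
    ∃ v : ℝ → ℝ, Continuous v ∧ v 0 = 0 ∧ StrictMonoOn v (Ioi 0) ∧
      ∀ δ ∈ Ioc 0 1, 0 < v δ ∧ v δ ≤ δ ∧
        ∀ x ∈ cube d, ∀ x' ∈ cube d, ∀ y ∈ cube d, ∀ y' ∈ cube d,
          dist x x' ≤ v δ → dist y y' ≤ v δ →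
            ∀ i, |Ros k x y i - Ros k x' y' i| ≤ 5 / 4 * Kbar k * δ := by
  have hK := Kbar_pos hk hpos hd
  obtain ⟨v, hv_cont, hv_zero, hv_mono, hv⟩ := exists_continuous_strictMonoOn_of_forall_exists
    (P := fun δ ρ => ∀ x ∈ cube d, ∀ x' ∈ cube d, ∀ y ∈ cube d, ∀ y' ∈ cube d,
      dist x x' ≤ ρ → dist y y' ≤ ρ →
        ∀ i, |Ros k x y i - Ros k x' y' i| ≤ Kbar k * δ / 4 + Kbar k * dist y y')
    (fun δ hδ => exists_abs_Ros_sub_le hk hpos (by positivity))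
    (fun _ _ _ _ hρ h x hx x' hx' y hy y' hy' hdx hdy =>
      h x hx x' hx' y hy y' hy' (hdx.trans hρ) (hdy.trans hρ))
    (fun _ _ _ hδ h x hx x' hx' y hy y' hy' hdx hdy i =>
      (h x hx x' hx' y hy y' hy' hdx hdy i).trans (by gcongr))
  refine ⟨v, hv_cont, hv_zero, hv_mono, fun δ hδ => ⟨(hv δ hδ).1, (hv δ hδ).2.1,
    fun x hx x' hx' y hy y' hy' hdx hdy i => ?_⟩⟩
  have hosc := (hv δ hδ).2.2 x hx x' hx' y hy y' hy' hdx hdy i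
  have : Kbar k * dist y y' ≤ Kbar k * δ := by gcongr; exact hdy.trans (hv δ hδ).2.1
  linarith

end Continuous

end Rosenblatt

lemma exists_Icc_subset_cube_forall_abs_sub_le {d : ℕ} {s : ℝ} (hs : s ≤ 1)
    (c : Fin d → ℝ) :
    ∃ w : Fin d → ℝ, Icc w (fun i => w i + s) ⊆ cube d ∧
      ∀ p ∈ cube d, (∀ i, |p i - c i| ≤ s / 2) → p ∈ Icc w (fun i => w i + s) := by
  refine ⟨fun i => max 0 (min (c i - s / 2) (1 - s)), fun q hq i => ?_,
    fun p hp hpc => ⟨fun i => ?_, fun i => ?_⟩⟩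
  · have hw : max 0 (min (c i - s / 2) (1 - s)) ≤ 1 - s :=
      max_le (by linarith) (min_le_right _ _)
    exact ⟨(le_max_left _ _).trans (hq.1 i), by linarith [hq.2 i]⟩
  · exact max_le (hp i).1 ((min_le_left _ _).trans (by linarith [(abs_le.1 (hpc i)).1]))
  · have : p i ≤ min (c i - s / 2) (1 - s) + s := by
      rw [← min_add_add_right]
      exact le_min (by linarith [(abs_le.1 (hpc i)).2]) (by linarith [(hp i).2])
    linarith [le_max_right 0 (min (c i - s / 2) (1 - s))]

theorem ros_image_in_hypercube_general
    {d : ℕ} (hd : 0 < d)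
    (κ : (Fin d → ℝ) → (Fin d → ℝ) → ℝ) (Klow : ℝ) (hA2 : A2 κ Klow) :
    ∃ δbar : ℝ, δbar ∈ Set.Ioc (0:ℝ) (1/2) ∧ ∃ v : ℝ → ℝ,
      ContinuousOn v (Set.Ioc 0 δbar) ∧ StrictMonoOn v (Set.Ioc 0 δbar) ∧
      (∀ δ ∈ Set.Ioc (0:ℝ) δbar, 0 < v δ ∧ v δ ≤ δ) ∧
      Tendsto v (nhdsWithin 0 (Set.Ioi 0)) (nhds 0) ∧
      ∀ δ ∈ Set.Ioc (0:ℝ) δbar, ∀ xt ∈ cube d, ∀ x' ∈ cube d,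
        ∃ w : Fin d → ℝ,
          Set.Icc w (fun i => w i + 2.5 * Kbar κ * δ) ⊆ cube d ∧
          ∀ x ∈ ball' (v δ) xt, ∀ yy ∈ ball' (v δ) x',
            Ros κ x yy ∈ Set.Icc w (fun i => w i + 2.5 * Kbar κ * δ) := by
  obtain ⟨hcont, hKlow, hlow⟩ := hA2
  obtain ⟨k, hk, hκk⟩ := exists_continuous_eqOn_cube_prod hcont
  have hpos : ∀ x ∈ cube d, ∀ y ∈ cube d, 0 < k x y := fun x hx y hy =>
    hκk x hx y hy ▸ hKlow.trans_le (hlow x hx y hy)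
  rw [Kbar_congr hκk]
  have hK : 0 < Kbar k := Kbar_pos hk hpos hd
  obtain ⟨v, hv_cont, hv_zero, hv_mono, hv⟩ :=
    exists_continuous_strictMonoOn_abs_Ros_sub_le hk hpos hd
  set δbar := min (1 / 2) (2 / (5 * Kbar k))
  have hδbar : ∀ δ ∈ Ioc 0 δbar, δ ∈ Ioc 0 1 ∧ 2.5 * Kbar k * δ ≤ 1 := fun δ hδ => by
    have h2 : δ ≤ 2 / (5 * Kbar k) := hδ.2.trans (min_le_right _ _)
    rw [le_div_iff₀ (by positivity)] at h2
    exact ⟨⟨hδ.1, hδ.2.trans ((min_le_left _ _).trans (by norm_num))⟩, by linarith⟩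
  refine ⟨δbar, ⟨by positivity, min_le_left _ _⟩, v, hv_cont.continuousOn,
    hv_mono.mono Ioc_subset_Ioi_self, fun δ hδ => (hv δ (hδbar δ hδ).1).imp_right And.left,
    by simpa [hv_zero] using (hv_cont.tendsto 0).mono_left nhdsWithin_le_nhds, ?_⟩
  intro δ hδ xt hxt x' hx'
  obtain ⟨hδ1, hside⟩ := hδbar δ hδ
  obtain ⟨w, hw_cube, hw⟩ := exists_Icc_subset_cube_forall_abs_sub_le hside (Ros k xt x')
  refine ⟨w, hw_cube, fun x ⟨hx, hdx⟩ y ⟨hy, hdy⟩ => ?_⟩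
  rw [← dist_eq_norm] at hdx hdy
  rw [Ros_congr hκk hx hy]
  exact hw _ (Ros_mem_cube hk hpos hx hy) fun i =>
    ((hv δ hδ1).2.2 x hx xt hxt y hy x' hx' hdx hdy i).trans (by linarith)

/-- **Lemma 6 (image of a ball under the Rosenblatt transform).** Under (A1)-(A2) there are
`δ̄ ∈ (0, 1/2]` and a continuous strictly increasing `v` with `0 < v(δ) ≤ δ` and `v(δ) → 0`,
independent of `(x̃, x')`, such that for all `δ ∈ (0, δ̄]` and `(x̃, x') ∈ X²` there is a closed
hypercube `W̄ ⊆ [0,1]^d` of side `2.5 K̄ δ` with `F_K(x, B_{v(δ)}(x')) ⊆ W̄` for every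
`x ∈ B_{v(δ)}(x̃)`. -/
theorem ros_image_in_hypercube
    {d : ℕ} (hd : 0 < d)
    (κ : (Fin d → ℝ) → (Fin d → ℝ) → ℝ) (hκ : IsMarkovDensity κ)
    (hA1 : A1 κ) (Klow : ℝ) (hA2 : A2 κ Klow) :
    ∃ δbar : ℝ, δbar ∈ Set.Ioc (0:ℝ) (1/2) ∧ ∃ v : ℝ → ℝ,
      ContinuousOn v (Set.Ioc 0 δbar) ∧ StrictMonoOn v (Set.Ioc 0 δbar) ∧
      (∀ δ ∈ Set.Ioc (0:ℝ) δbar, 0 < v δ ∧ v δ ≤ δ) ∧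
      Tendsto v (nhdsWithin 0 (Set.Ioi 0)) (nhds 0) ∧
      ∀ δ ∈ Set.Ioc (0:ℝ) δbar, ∀ xt ∈ cube d, ∀ x' ∈ cube d,
        ∃ w : Fin d → ℝ,
          Set.Icc w (fun i => w i + 2.5 * Kbar κ * δ) ⊆ cube d ∧
          ∀ x ∈ ball' (v δ) xt, ∀ yy ∈ ball' (v δ) x',
            Ros κ x yy ∈ Set.Icc w (fun i => w i + 2.5 * Kbar κ * δ) :=
  ros_image_in_hypercube_general hd κ Klow hA2
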